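/- Assume (H1) and (H2). (i) Every ergodic σ-invariant Borel probability measure ν on Σ satisfies ν([0]) · log f₀'(1) + ν([1]) · log f₁'(1) ≤ 0, where [0] = {ξ ∈ Σ₂ : ξ₀ = 0} and [1] = {ξ ∈ Σ₂ : ξ₀ = 1}. (ii) Consequently, if f₁'(1) > 1 and C = |log f₀'(1)| / log f₁'(1), then every σ-invariant Borel probability measure ν on Σ satisfies ν([1]) ≤ C · ν([0]), and the topological entropy of σ on Σ satisfies h_top(σ, Σ) ≤ 𝓗(p), where p = min{1/2, C/(1+C)} and 𝓗(p) = −p log p − (1−p) log(1−p). -/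

import Mathlib

open Set MeasureTheory Filter

namespace DGR

/-- The two-sided sequence space `Σ₂ = {0,1}^ℤ`. -/
abbrev Seq2 := ℤ → Fin 2

/-- The left shift map `σ`. -/
def shift (ξ : Seq2) : Seq2 := fun n => ξ (n + 1)

/-- The constant sequence `0^ℤ`. -/
def zeroSeq : Seq2 := fun _ => 0

/-- The skew-product `F̃(ξ,x) = (σ ξ, f̃_{ξ₀} x)`. -/
def F (f0 f1 : ℝ → ℝ) (p : Seq2 × ℝ) : Seq2 × ℝ :=
  (shift p.1, if p.1 0 = 0 then f0 p.2 else f1 p.2)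

/-- The fixed point `P = (0^ℤ, 1)`. -/
def Pfix : Seq2 × ℝ := (zeroSeq, 1)

/-- The fixed point `Q = (0^ℤ, 0)`. -/
def Qfix : Seq2 × ℝ := (zeroSeq, 0)

/-- `f_ξ^n = f_{ξ_{n-1}} ∘ ⋯ ∘ f_{ξ₀}`. -/
def fIter (f0 f1 : ℝ → ℝ) (ξ : Seq2) : ℕ → ℝ → ℝ
  | 0, x => x
  | n + 1, x => (if ξ (n : ℤ) = 0 then f0 else f1) (fIter f0 f1 ξ n x)

/-- The derivative `(f_ξ^n)'(x)` (chain rule product). -/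
def fIterDeriv (f0 f1 df0 df1 : ℝ → ℝ) (ξ : Seq2) : ℕ → ℝ → ℝ
  | 0, _ => 1
  | n + 1, x => fIterDeriv f0 f1 df0 df1 ξ n x *
      (if ξ (n : ℤ) = 0 then df0 else df1) (fIter f0 f1 ξ n x)

/-- `ξ⁺` is admissible for `x`: all forward iterates are defined and stay in `[0,1]`. -/
def forwardAdmissible (f0 f1 : ℝ → ℝ) (d : ℝ) (ξ : Seq2) (x : ℝ) : Prop :=
  ∀ n : ℕ, fIter f0 f1 ξ n x ∈ Icc (0 : ℝ) 1 ∧ (ξ (n : ℤ) = 1 → d ≤ fIter f0 f1 ξ n x)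

/-- `ξ⁻` is admissible for `x`: there is a backward orbit through `x` staying in `[0,1]`. -/
def backwardAdmissible (f0 f1 : ℝ → ℝ) (d : ℝ) (ξ : Seq2) (x : ℝ) : Prop :=
  ∃ y : ℕ → ℝ, y 0 = x ∧ ∀ m : ℕ,
    y m ∈ Icc (0 : ℝ) 1 ∧
    (ξ (-(m : ℤ) - 1) = 0 → f0 (y (m + 1)) = y m) ∧
    (ξ (-(m : ℤ) - 1) = 1 → d ≤ y (m + 1) ∧ f1 (y (m + 1)) = y m)

/-- The maximal invariant set `Γ` of `F̃` in `Σ₂ × [0,1]`. -/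
def Gamma (f0 f1 : ℝ → ℝ) (d : ℝ) : Set (Seq2 × ℝ) :=
  { p | forwardAdmissible f0 f1 d p.1 p.2 ∧ backwardAdmissible f0 f1 d p.1 p.2 }

/-- The subshift `Σ = π(Γ)` of admissible sequences. -/
def SigmaA (f0 f1 : ℝ → ℝ) (d : ℝ) : Set Seq2 := Prod.fst '' Gamma f0 f1 d

/-- `I_{ξ⁺}`. -/
def Iplus (f0 f1 : ℝ → ℝ) (d : ℝ) (ξ : Seq2) : Set ℝ := { x | forwardAdmissible f0 f1 d ξ x }

/-- `I_{ξ⁻}`. -/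
def Iminus (f0 f1 : ℝ → ℝ) (d : ℝ) (ξ : Seq2) : Set ℝ := { x | backwardAdmissible f0 f1 d ξ x }

/-- `I_ξ = I_{ξ⁺} ∩ I_{ξ⁻}`, the spine over `ξ`. -/
def Ifiber (f0 f1 : ℝ → ℝ) (d : ℝ) (ξ : Seq2) : Set ℝ := Iplus f0 f1 d ξ ∩ Iminus f0 f1 d ξ

/-- `x_{ξ⁺}`, the left endpoint of `I_{ξ⁺} = [x_{ξ⁺}, 1]`. -/
noncomputable def xPlus (f0 f1 : ℝ → ℝ) (d : ℝ) (ξ : Seq2) : ℝ := sInf (Iplus f0 f1 d ξ)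

/-- `x_{ξ⁻}`, the right endpoint of `I_{ξ⁻} = [0, x_{ξ⁻}]`. -/
noncomputable def xMinus (f0 f1 : ℝ → ℝ) (d : ℝ) (ξ : Seq2) : ℝ := sSup (Iminus f0 f1 d ξ)

/-- Hypothesis (H1), stated for strictly increasing differentiable extensions
`f0, f1 : ℝ → ℝ` with derivative functions `df0, df1`, whose restrictions to
`[0,1]` resp. `[d,1]` are the fiber maps. -/
structure H1 (f0 f1 df0 df1 : ℝ → ℝ) (d : ℝ) : Prop where
  d_mem : d ∈ Ioo (0 : ℝ) 1
  mono0 : StrictMono f0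
  mono1 : StrictMono f1
  hasDeriv0 : ∀ x, HasDerivAt f0 (df0 x) x
  hasDeriv1 : ∀ x, HasDerivAt f1 (df1 x) x
  contDeriv0 : ContinuousOn df0 (Icc 0 1)
  contDeriv1 : ContinuousOn df1 (Icc d 1)
  maps0 : MapsTo f0 (Icc 0 1) (Icc 0 1)
  surj0 : SurjOn f0 (Icc 0 1) (Icc 0 1)
  maps1 : MapsTo f1 (Icc d 1) (Icc 0 1)
  deriv0_zero : 1 < df0 0
  deriv0_one : df0 1 ∈ Ioo (0 : ℝ) 1
  f0_above : ∀ x ∈ Ioo (0 : ℝ) 1, x < f0 x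
  f1_d : f1 d = 0
  f1_below : ∀ x ∈ Icc d 1, f1 x < x
  deriv1_one : 0 < df1 1

/-- Hypothesis (H2): `f₀'` strictly decreasing, `f₁'` nonincreasing. -/
def H2 (df0 df1 : ℝ → ℝ) (d : ℝ) : Prop :=
  StrictAntiOn df0 (Icc 0 1) ∧ AntitoneOn df1 (Icc d 1)

/-- Hypothesis (H2+) with constant `M`. -/
def H2plus (df0 df1 : ℝ → ℝ) (d M : ℝ) : Prop :=
  1 < M ∧
  (∀ x ∈ Icc (0 : ℝ) 1, ∀ y ∈ Icc (0 : ℝ) 1, x < y →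
    M⁻¹ * (y - x) ≤ Real.log (df0 x) - Real.log (df0 y) ∧
      Real.log (df0 x) - Real.log (df0 y) ≤ M * (y - x)) ∧
  (∀ x ∈ Icc d 1, ∀ y ∈ Icc d 1, x < y →
    M⁻¹ * (y - x) ≤ Real.log (df1 x) - Real.log (df1 y) ∧
      Real.log (df1 x) - Real.log (df1 y) ≤ M * (y - x))

/-- The fiber Lyapunov exponent `χ(μ) = ∫ log f'_{ξ₀}(x) dμ(ξ,x)`. -/
noncomputable def lyap (df0 df1 : ℝ → ℝ) (μ : Measure (Seq2 × ℝ)) : ℝ :=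
  ∫ p, Real.log ((if p.1 0 = 0 then df0 else df1) p.2) ∂μ

/-- An `F`-invariant Borel probability measure on `Γ`. -/
def IsInvGamma (f0 f1 : ℝ → ℝ) (d : ℝ) (μ : Measure (Seq2 × ℝ)) : Prop :=
  IsProbabilityMeasure μ ∧ μ (Gamma f0 f1 d) = 1 ∧ μ.map (F f0 f1) = μ

/-- An ergodic `F`-invariant Borel probability measure on `Γ`. -/
def IsErgGamma (f0 f1 : ℝ → ℝ) (d : ℝ) (μ : Measure (Seq2 × ℝ)) : Prop :=
  IsInvGamma f0 f1 d μ ∧ Ergodic (F f0 f1) μ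

/-- A `σ`-invariant Borel probability measure on `Σ`. -/
def IsInvSigma (f0 f1 : ℝ → ℝ) (d : ℝ) (ν : Measure Seq2) : Prop :=
  IsProbabilityMeasure ν ∧ ν (SigmaA f0 f1 d) = 1 ∧ ν.map shift = ν

/-- An ergodic `σ`-invariant Borel probability measure on `Σ`. -/
def IsErgSigma (f0 f1 : ℝ → ℝ) (d : ℝ) (ν : Measure Seq2) : Prop :=
  IsInvSigma f0 f1 d ν ∧ Ergodic shift ν

/-- `f_{[w]} = f_{w_{n-1}} ∘ ⋯ ∘ f_{w_0}` for a finite word `w`. -/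
def fWord (f0 f1 : ℝ → ℝ) : List (Fin 2) → ℝ → ℝ
  | [], x => x
  | i :: w, x => fWord f0 f1 w ((if i = 0 then f0 else f1) x)

/-- The derivative `(f_{[w]})'(x)`. -/
def fWordDeriv (f0 f1 df0 df1 : ℝ → ℝ) : List (Fin 2) → ℝ → ℝ
  | [], _ => 1
  | i :: w, x => (if i = 0 then df0 x else df1 x) *
      fWordDeriv f0 f1 df0 df1 w ((if i = 0 then f0 else f1) x)

/-- The word `w` is (forward) admissible at `x`. -/
def wordAdm (f0 f1 : ℝ → ℝ) (d : ℝ) : List (Fin 2) → ℝ → Prop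
  | [], x => x ∈ Icc (0 : ℝ) 1
  | i :: w, x => x ∈ Icc (0 : ℝ) 1 ∧ (i = 1 → d ≤ x) ∧
      wordAdm f0 f1 d w ((if i = 0 then f0 else f1) x)

/-- The admissibility interval `I_{[w]}`. -/
def IWord (f0 f1 : ℝ → ℝ) (d : ℝ) (w : List (Fin 2)) : Set ℝ := { x | wordAdm f0 f1 d w x }

/-- The point `a_{[w]}`, left endpoint of `I_{[w]} = [a_{[w]}, 1]`. -/
noncomputable def aWord (f0 f1 : ℝ → ℝ) (d : ℝ) (w : List (Fin 2)) : ℝ := sInf (IWord f0 f1 d w)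

/-- The periodic sequence `w^ℤ`. -/
def perSeq (w : List (Fin 2)) : Seq2 := fun n => w.getD (n % (w.length : ℤ)).toNat 0

/-- The finite word `(ξ_a, ξ_{a+1}, …, ξ_{a+n-1})` read off a sequence. -/
def seqWord (ξ : Seq2) (a : ℤ) (n : ℕ) : List (Fin 2) := List.ofFn fun i : Fin n => ξ (a + (i.1 : ℤ))

/-- `X` is a periodic point of `F` in `Γ` with period `n ≥ 1`. -/
def IsPerPt (f0 f1 : ℝ → ℝ) (d : ℝ) (X : Seq2 × ℝ) (n : ℕ) : Prop :=
  X ∈ Gamma f0 f1 d ∧ 1 ≤ n ∧ (F f0 f1)^[n] X = X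

/-- Hyperbolic periodic point (the multiplier is different from 1). -/
def IsHypPerPt (f0 f1 df0 df1 : ℝ → ℝ) (d : ℝ) (X : Seq2 × ℝ) : Prop :=
  ∃ n, IsPerPt f0 f1 d X n ∧ fIterDeriv f0 f1 df0 df1 X.1 n X.2 ≠ 1

/-- Hyperbolic periodic point of expanding type. -/
def IsExpPerPt (f0 f1 df0 df1 : ℝ → ℝ) (d : ℝ) (X : Seq2 × ℝ) : Prop :=
  ∃ n, IsPerPt f0 f1 d X n ∧ 1 < fIterDeriv f0 f1 df0 df1 X.1 n X.2

/-- Hyperbolic periodic point of contracting type. -/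
def IsConPerPt (f0 f1 df0 df1 : ℝ → ℝ) (d : ℝ) (X : Seq2 × ℝ) : Prop :=
  ∃ n, IsPerPt f0 f1 d X n ∧ 0 < fIterDeriv f0 f1 df0 df1 X.1 n X.2 ∧
    fIterDeriv f0 f1 df0 df1 X.1 n X.2 < 1

/-- Parabolic periodic point (multiplier 1). -/
def IsParPerPt (f0 f1 df0 df1 : ℝ → ℝ) (d : ℝ) (X : Seq2 × ℝ) : Prop :=
  ∃ n, IsPerPt f0 f1 d X n ∧ fIterDeriv f0 f1 df0 df1 X.1 n X.2 = 1

/-- The stable set `W^s(R, F)` of a point, for `F : Γ → Γ`. -/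
def Ws (f0 f1 : ℝ → ℝ) (d : ℝ) (R : Seq2 × ℝ) : Set (Seq2 × ℝ) :=
  { X | (∀ k : ℕ, (F f0 f1)^[k] X ∈ Gamma f0 f1 d) ∧
      Tendsto (fun k => (F f0 f1)^[k] X) atTop (nhds R) }

/-- The unstable set `W^u(R, F) = W^s(R, F⁻¹)` of a point, for `F : Γ → Γ`. -/
def Wu (f0 f1 : ℝ → ℝ) (d : ℝ) (R : Seq2 × ℝ) : Set (Seq2 × ℝ) :=
  { X | ∃ Z : ℕ → Seq2 × ℝ, Z 0 = X ∧
      (∀ m : ℕ, Z m ∈ Gamma f0 f1 d ∧ F f0 f1 (Z (m + 1)) = Z m) ∧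
      Tendsto Z atTop (nhds R) }

/-- The stable set of the orbit of `R`. -/
def WsOrbit (f0 f1 : ℝ → ℝ) (d : ℝ) (R : Seq2 × ℝ) : Set (Seq2 × ℝ) :=
  ⋃ j : ℕ, Ws f0 f1 d ((F f0 f1)^[j] R)

/-- The unstable set of the orbit of `R`. -/
def WuOrbit (f0 f1 : ℝ → ℝ) (d : ℝ) (R : Seq2 × ℝ) : Set (Seq2 × ℝ) :=
  ⋃ j : ℕ, Wu f0 f1 d ((F f0 f1)^[j] R)

/-- The homoclinic class `H(R,F)`. -/
def homClass (f0 f1 : ℝ → ℝ) (d : ℝ) (R : Seq2 × ℝ) : Set (Seq2 × ℝ) :=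
  closure (WsOrbit f0 f1 d R ∩ WuOrbit f0 f1 d R)

/-- `R₁` and `R₂` are homoclinically related. -/
def HomRel (f0 f1 : ℝ → ℝ) (d : ℝ) (R₁ R₂ : Seq2 × ℝ) : Prop :=
  (WsOrbit f0 f1 d R₁ ∩ WuOrbit f0 f1 d R₂).Nonempty ∧
  (WuOrbit f0 f1 d R₁ ∩ WsOrbit f0 f1 d R₂).Nonempty

/-- A set is (fiber) hyperbolic of expanding type. -/
def IsHypExpanding (f0 f1 df0 df1 : ℝ → ℝ) (Λ : Set (Seq2 × ℝ)) : Prop :=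
  ∃ C : ℝ, 0 < C ∧ ∃ α : ℝ, 0 < α ∧ ∀ p ∈ Λ, ∀ n : ℕ, 1 ≤ n →
    C * Real.exp (α * n) ≤ fIterDeriv f0 f1 df0 df1 p.1 n p.2

/-- A set is (fiber) hyperbolic of contracting type (backward iterates expand). -/
def IsHypContracting (f0 f1 df0 df1 : ℝ → ℝ) (d : ℝ) (Λ : Set (Seq2 × ℝ)) : Prop :=
  ∃ C : ℝ, 0 < C ∧ ∃ α : ℝ, 0 < α ∧ ∀ p ∈ Λ, ∀ Z : ℕ → Seq2 × ℝ, Z 0 = p →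
    (∀ m : ℕ, Z m ∈ Gamma f0 f1 d ∧ F f0 f1 (Z (m + 1)) = Z m) →
    ∀ n : ℕ, 1 ≤ n → fIterDeriv f0 f1 df0 df1 (Z n).1 n (Z n).2 ≤ C * Real.exp (-(α * n))

/-- The nonwandering set `Ω(Γ, F)` of `F : Γ → Γ`. -/
def nonwandering (f0 f1 : ℝ → ℝ) (d : ℝ) : Set (Seq2 × ℝ) :=
  { X | X ∈ Gamma f0 f1 d ∧ ∀ U : Set (Seq2 × ℝ), IsOpen U → X ∈ U →
      ∃ n : ℕ, 1 ≤ n ∧ ∃ Y ∈ U ∩ Gamma f0 f1 d, (F f0 f1)^[n] Y ∈ U ∩ Gamma f0 f1 d }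

/-- The finite word `w` occurs in the sequence `ξ`. -/
def OccursIn (w : List (Fin 2)) (ξ : Seq2) : Prop :=
  ∃ k : ℤ, ∀ i : ℕ, i < w.length → ξ (k + (i : ℤ)) = w.getD i 0

/-- The set `Σ^het` of heteroclinic admissible sequences. -/
def SigmaHet (f0 f1 : ℝ → ℝ) (d : ℝ) : Set Seq2 :=
  { ξ | ξ ∈ SigmaA f0 f1 d ∧ ∃ k : ℤ, ∃ w : List (Fin 2),
      (∀ m : ℤ, m < k → ξ m = 0) ∧
      (∀ i : ℕ, i < w.length → ξ (k + (i : ℤ)) = w.getD i 0) ∧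
      (∀ m : ℤ, k + (w.length : ℤ) ≤ m → ξ m = 0) ∧
      fWord f0 f1 w 1 = 0 }

/-- `Σ^cod = Σ ∖ Σ^het`. -/
def SigmaCod (f0 f1 : ℝ → ℝ) (d : ℝ) : Set Seq2 := SigmaA f0 f1 d \ SigmaHet f0 f1 d

/-- `Γ^cod = π⁻¹(Σ^cod) ∩ Γ`. -/
def GammaCod (f0 f1 : ℝ → ℝ) (d : ℝ) : Set (Seq2 × ℝ) :=
  { p ∈ Gamma f0 f1 d | p.1 ∈ SigmaCod f0 f1 d }

/-- `Σ^sing`: sequences whose spine is a singleton. -/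
def SigmaSing (f0 f1 : ℝ → ℝ) (d : ℝ) : Set Seq2 :=
  { ξ | ξ ∈ SigmaA f0 f1 d ∧ (Ifiber f0 f1 d ξ).Subsingleton }

/-- `Σ^spine`: sequences whose spine is a nondegenerate interval. -/
def SigmaSpine (f0 f1 : ℝ → ℝ) (d : ℝ) : Set Seq2 :=
  { ξ | ξ ∈ SigmaA f0 f1 d ∧ ¬ (Ifiber f0 f1 d ξ).Subsingleton }

/-- `T` restricted to `S` is topologically transitive. -/
def TransOn {α : Type*} [TopologicalSpace α] (T : α → α) (S : Set α) : Prop :=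
  ∀ U V : Set α, IsOpen U → IsOpen V → (U ∩ S).Nonempty → (V ∩ S).Nonempty →
    ∃ n : ℕ, 1 ≤ n ∧ (T^[n] '' (U ∩ S) ∩ (V ∩ S)).Nonempty

/-- `T` restricted to `S` is topologically mixing. -/
def MixOn {α : Type*} [TopologicalSpace α] (T : α → α) (S : Set α) : Prop :=
  ∀ U V : Set α, IsOpen U → IsOpen V → (U ∩ S).Nonempty → (V ∩ S).Nonempty →
    ∃ N : ℕ, ∀ n : ℕ, N ≤ n → (T^[n] '' (U ∩ S) ∩ (V ∩ S)).Nonempty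

/-- A subshift of finite type: the sequences avoiding a finite list of forbidden words. -/
def IsSFT (S : Set Seq2) : Prop :=
  ∃ Fw : Finset (List (Fin 2)), S = { ξ | ∀ w ∈ Fw, ¬ OccursIn w ξ }

/-- Number of words of length `n` appearing in sequences of `S`. -/
noncomputable def wordCount (S : Set Seq2) (n : ℕ) : ℕ :=
  Nat.card { w : List (Fin 2) // w.length = n ∧ ∃ ξ ∈ S, OccursIn w ξ }

/-- Topological entropy of the shift on a subshift `S`, as exponential growth rate of
the number of words. -/
noncomputable def subshiftEntropy (S : Set Seq2) : ℝ :=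
  Filter.limsup (fun n : ℕ => Real.log (wordCount S n) / n) Filter.atTop

/-- `Λ` is `F`-invariant. -/
def IsInvariantSet (f0 f1 : ℝ → ℝ) (Λ : Set (Seq2 × ℝ)) : Prop := F f0 f1 '' Λ = Λ

/-- `Λ` is locally maximal: it is the set of full orbits inside some neighborhood. -/
def IsLocallyMaximal (f0 f1 : ℝ → ℝ) (Λ : Set (Seq2 × ℝ)) : Prop :=
  ∃ V : Set (Seq2 × ℝ), IsOpen V ∧ Λ ⊆ V ∧
    Λ = { X | ∃ Z : ℤ → Seq2 × ℝ, Z 0 = X ∧ (∀ n : ℤ, Z (n + 1) = F f0 f1 (Z n)) ∧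
      ∀ n : ℤ, Z n ∈ V }

/-- Basic set with uniform fiber expansion. -/
def IsBasicExp (f0 f1 df0 df1 : ℝ → ℝ) (d : ℝ) (Λ : Set (Seq2 × ℝ)) : Prop :=
  Λ ⊆ Gamma f0 f1 d ∧ IsCompact Λ ∧ IsInvariantSet f0 f1 Λ ∧ IsLocallyMaximal f0 f1 Λ ∧
  TransOn (F f0 f1) Λ ∧ IsHypExpanding f0 f1 df0 df1 Λ

/-- Basic set with uniform fiber contraction. -/
def IsBasicCon (f0 f1 df0 df1 : ℝ → ℝ) (d : ℝ) (Λ : Set (Seq2 × ℝ)) : Prop :=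
  Λ ⊆ Gamma f0 f1 d ∧ IsCompact Λ ∧ IsInvariantSet f0 f1 Λ ∧ IsLocallyMaximal f0 f1 Λ ∧
  TransOn (F f0 f1) Λ ∧ IsHypContracting f0 f1 df0 df1 d Λ

/-- The entropy function `𝓗(p) = -p log p - (1-p) log (1-p)`. -/
noncomputable def entH (p : ℝ) : ℝ := -(p * Real.log p) - (1 - p) * Real.log (1 - p)

/-! By (H2) and the mean value theorem, the distance `1 - x` to the top of the fiber is multiplied
at least by `f_i'(1)` under the fiber map `f_i`. Along an orbit in `Γ` the products of these
factors over any block of symbols therefore stay bounded: a symbol `1` pushes the orbit at least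
`1 - f₁ 1` below `1`, and the rest of the block can expand this distance at most to `1`. So the
Birkhoff sums of `log f'_{ξ₀}(1)` are bounded above on `Σ`, and integrating them against an
invariant measure gives (i); (ii) is algebra. The same bound says that a word of length `n` in `Σ`
has at most `n C/(1+C) + O(1)` ones, and giving each word its Bernoulli(`p`) mass,
`p = min (1/2) (C/(1+C))`, shows there are at most `exp (n 𝓗(p) + O(1))` of them. -/

lemma mul_sub_le_sub_of_antitoneOn_deriv {f df : ℝ → ℝ} {a b x : ℝ}
    (hf : ∀ y, HasDerivAt f (df y) y) (hdf : AntitoneOn df (Icc a b)) (hx : x ∈ Icc a b) :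
    df b * (b - x) ≤ f b - f x := by
  have hD : interior (Icc x b) ⊆ Icc a b := interior_subset.trans (Icc_subset_Icc_left hx.1)
  refine (convex_Icc x b).mul_sub_le_image_sub_of_le_deriv
    (fun y _ => (hf y).continuousAt.continuousWithinAt)
    (fun y _ => (hf y).differentiableAt.differentiableWithinAt)
    (fun y hy => ?_) x (left_mem_Icc.mpr hx.2) b (right_mem_Icc.mpr hx.2) hx.2
  rw [(hf y).deriv]
  exact hdf (hD hy) (right_mem_Icc.mpr (hx.1.trans hx.2)) (interior_subset hy).2

section Birkhoff

variable {α : Type*} [MeasurableSpace α] {μ : Measure α} {T : α → α} {φ : α → ℝ}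

lemma integral_birkhoffSum (hT : MeasurePreserving T μ μ) (hφ : Integrable φ μ) (n : ℕ) :
    ∫ x, birkhoffSum T φ n x ∂μ = n * ∫ x, φ x ∂μ := by
  have hcomp : ∀ k, ∫ x, φ (T^[k] x) ∂μ = ∫ x, φ x ∂μ := fun k => by
    rw [← integral_map (hT.iterate k).measurable.aemeasurable
      ((hT.iterate k).map_eq.symm ▸ hφ.aestronglyMeasurable), (hT.iterate k).map_eq]
  simp only [birkhoffSum]
  rw [integral_finsetSum (f := fun k x => φ (T^[k] x)) _
    fun k _ => (hT.iterate k).integrable_comp_of_integrable hφ]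
  simp [hcomp]

lemma integral_nonpos_of_birkhoffSum_le [IsFiniteMeasure μ] (hT : MeasurePreserving T μ μ)
    (hφ : Integrable φ μ) {K : ℝ} (hK : ∀ n, ∀ᵐ x ∂μ, birkhoffSum T φ n x ≤ K) :
    ∫ x, φ x ∂μ ≤ 0 := by
  have hbound : ∀ n : ℕ, n * ∫ x, φ x ∂μ ≤ μ.real univ * K := fun n => by
    rw [← integral_birkhoffSum hT hφ n, ← smul_eq_mul, ← integral_const]
    exact integral_mono_ae (integrable_finsetSum _ fun k _ =>
      (hT.iterate k).integrable_comp_of_integrable hφ) (integrable_const K) (hK n)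
  by_contra! hpos
  obtain ⟨n, hn⟩ := exists_nat_gt (μ.real univ * K / ∫ x, φ x ∂μ)
  exact (hbound n).not_gt ((div_lt_iff₀ hpos).1 hn)

end Birkhoff

lemma card_le_exp_of_neg_le_sum_log {ι β : Type*} [Fintype ι] [Fintype β] (w : β → ℝ)
    (hw : ∀ b, 0 < w b) (hw_sum : ∑ b, w b = 1) (A : Finset (ι → β)) {c : ℝ}
    (hA : ∀ v ∈ A, -c ≤ ∑ i, Real.log (w (v i))) : (A.card : ℝ) ≤ Real.exp c := by
  classical
  have hweight : ∀ v ∈ A, Real.exp (-c) ≤ ∏ i, w (v i) := fun v hv => by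
    rw [← Real.exp_log (Finset.prod_pos fun i _ => hw (v i)),
      Real.log_prod fun i _ => (hw (v i)).ne']
    exact Real.exp_le_exp.2 (hA v hv)
  have hmass : A.card * Real.exp (-c) ≤ 1 :=
    calc A.card * Real.exp (-c) = ∑ v ∈ A, Real.exp (-c) := by simp
      _ ≤ ∑ v ∈ A, ∏ i, w (v i) := Finset.sum_le_sum hweight
      _ ≤ ∑ v : ι → β, ∏ i, w (v i) := Finset.sum_le_univ_sum_of_nonneg fun v =>
          Finset.prod_nonneg fun i _ => (hw (v i)).le
      _ = 1 := by rw [← Fintype.prod_sum, hw_sum, Finset.prod_const_one]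
  rwa [Real.exp_neg, ← div_eq_mul_inv, div_le_one (Real.exp_pos c)] at hmass

lemma entH_eq_binEntropy : entH = Real.binEntropy := by
  funext p
  simp only [entH, Real.binEntropy_eq_negMulLog_add_negMulLog_one_sub, Real.negMulLog]
  ring

lemma log_bernoulli_eq_neg_entH_sub {a b p : ℝ} (ha : a < 0) (hb : 0 < b)
    (hp : p = min (1 / 2) (-a / (b - a))) :
    Real.log (1 - p) = -entH p - (Real.log (1 - p) - Real.log p) / (b - a) * a ∧
      Real.log p = -entH p - (Real.log (1 - p) - Real.log p) / (b - a) * b := by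
  set q := -a / (b - a)
  -- either `p = q`, or `p = 1/2` and the two weights coincide
  have hLpq : (Real.log (1 - p) - Real.log p) * (p - q) = 0 := by
    rcases le_total q (1 / 2) with h | h
    · rw [hp, min_eq_right h, sub_self, mul_zero]
    · rw [hp, min_eq_left h]
      norm_num
  have hba : b - a ≠ 0 := by linarith
  have hqa : a / (b - a) = -q := by simp only [q]; ring
  have hqb : b / (b - a) = 1 - q := by simp only [q]; field_simp; ring
  rw [div_mul_eq_mul_div, mul_div_assoc, hqa, div_mul_eq_mul_div, mul_div_assoc, hqb, entH]
  constructor <;> linear_combination hLpq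

lemma shift_iterate_apply (i : ℕ) (ξ : Seq2) (n : ℤ) : shift^[i] ξ n = ξ (n + i) := by
  induction i generalizing ξ with
  | zero => simp
  | succ i ih => rw [Function.iterate_succ_apply, ih, shift, Nat.cast_succ, add_assoc]

lemma measurable_shift : Measurable shift :=
  measurable_pi_lambda _ fun n => measurable_pi_apply (n + 1)

lemma integral_comp_apply_zero (ν : Measure Seq2) [IsFiniteMeasure ν] (g : Fin 2 → ℝ) :
    ∫ ξ, g (ξ 0) ∂ν = (ν {ξ | ξ 0 = 0}).toReal * g 0 + (ν {ξ | ξ 0 = 1}).toReal * g 1 := by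
  rw [← integral_map (measurable_pi_apply 0).aemeasurable
      Measurable.of_discrete.aestronglyMeasurable, integral_fintype .of_finite,
    Fin.sum_univ_two, map_measureReal_apply (measurable_pi_apply 0) (measurableSet_singleton _),
    map_measureReal_apply (measurable_pi_apply 0) (measurableSet_singleton _)]
  rfl

lemma wordCount_le_card (S : Set Seq2) (n : ℕ) [DecidablePred fun v : Fin n → Fin 2 =>
      ∃ ξ ∈ S, ∃ k : ℤ, ∀ i : Fin n, ξ (k + i) = v i] :
    wordCount S n ≤ (Finset.univ.filter fun v : Fin n → Fin 2 =>
      ∃ ξ ∈ S, ∃ k : ℤ, ∀ i : Fin n, ξ (k + i) = v i).card := by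
  rw [← Fintype.card_subtype, ← Nat.card_eq_fintype_card]
  refine Nat.card_le_card_of_injective
    (fun w => ⟨fun i => w.1.getD i 0, ?_⟩) fun w w' hww => Subtype.ext ?_
  · obtain ⟨ξ, hξ, k, hk⟩ := w.2.2
    exact ⟨ξ, hξ, k, fun i => hk i (w.2.1.symm ▸ i.2)⟩
  · refine List.ext_getElem (w.2.1.trans w'.2.1.symm) fun i hi hi' => ?_
    have h : w.1.getD i 0 = w'.1.getD i 0 := congrFun (congrArg Subtype.val hww) ⟨i, w.2.1 ▸ hi⟩
    rwa [List.getD_eq_getElem _ _ hi, List.getD_eq_getElem _ _ hi'] at h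

lemma subshiftEntropy_le_of_wordCount_le_exp {S : Set Seq2} {h c : ℝ} (hh : 0 ≤ h) (hc : 0 ≤ c)
    (hS : ∀ n : ℕ, (wordCount S n : ℝ) ≤ Real.exp (n * h + c)) : subshiftEntropy S ≤ h := by
  have hlog : ∀ n : ℕ, Real.log (wordCount S n) ≤ n * h + c := fun n => by
    rcases (Nat.zero_le (wordCount S n)).eq_or_lt with h0 | hpos
    · rw [← h0, Nat.cast_zero, Real.log_zero]; positivity
    · exact (Real.log_le_iff_le_exp (by exact_mod_cast hpos)).2 (hS n)
  have hlim : Tendsto (fun n : ℕ => h + c / n) atTop (nhds h) := by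
    simpa using tendsto_const_nhds.add (tendsto_const_div_atTop_nhds_zero_nat c)
  rw [subshiftEntropy, ← hlim.limsup_eq]
  refine limsup_le_limsup ?_ (isCoboundedUnder_le_of_le atTop fun n =>
    div_nonneg (Real.log_natCast_nonneg _) n.cast_nonneg) hlim.isBoundedUnder_le
  filter_upwards [eventually_gt_atTop 0] with n hn
  rw [div_le_iff₀ (by exact_mod_cast hn), add_mul, div_mul_cancel₀ _ (by positivity)]
  linarith [hlog n]

def derivAtOne (df0 df1 : ℝ → ℝ) (i : Fin 2) : ℝ := if i = 0 then df0 1 else df1 1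

def IsFiberOrbit (f0 f1 : ℝ → ℝ) (d : ℝ) (ξ : Seq2) (z : ℤ → ℝ) : Prop :=
  ∀ n, z n ∈ Icc (0 : ℝ) 1 ∧ (ξ n = 1 → d ≤ z n) ∧ z (n + 1) = (if ξ n = 0 then f0 else f1) (z n)

section FiberOrbit

variable {f0 f1 df0 df1 : ℝ → ℝ} {d : ℝ} {ξ : Seq2} {z : ℤ → ℝ}

lemma exists_isFiberOrbit (hξ : ξ ∈ SigmaA f0 f1 d) : ∃ z, IsFiberOrbit f0 f1 d ξ z := by
  obtain ⟨⟨η, x⟩, hΓ, hη⟩ := hξ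
  obtain ⟨hfw, y, hy0, hy⟩ : (ξ, x) ∈ Gamma f0 f1 d := hη ▸ hΓ
  let z : ℤ → ℝ
    | Int.ofNat k => fIter f0 f1 ξ k x
    | Int.negSucc m => y (m + 1)
  have hz_neg : ∀ m : ℕ, z (-(m : ℤ)) = y m
    | 0 => hy0.symm
    | m + 1 => rfl
  refine ⟨z, fun n => ?_⟩
  cases n with
  | ofNat k => exact ⟨(hfw k).1, (hfw k).2, rfl⟩
  | negSucc m =>
    obtain ⟨-, h0, h1⟩ := hy m
    have hn : Int.negSucc m = -(m : ℤ) - 1 := by omega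
    have hsucc : Int.negSucc m + 1 = -(m : ℤ) := by omega
    refine ⟨(hy (m + 1)).1, fun h => (h1 (hn ▸ h)).1, ?_⟩
    rw [hsucc, hz_neg]
    show y m = _
    rcases Fin.exists_fin_two.mp ⟨ξ (Int.negSucc m), rfl⟩ with h | h
    · rw [if_pos h, (h0 (hn ▸ h)).symm]
    · rw [if_neg (by rw [h]; decide), (h1 (hn ▸ h)).2.symm]

lemma H1.f0_one (h1 : H1 f0 f1 df0 df1 d) : f0 1 = 1 := by
  obtain ⟨x, hx, hfx⟩ := h1.surj0 (right_mem_Icc.mpr zero_le_one)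
  exact le_antisymm (h1.maps0 (right_mem_Icc.mpr zero_le_one)).2
    (by simpa [hfx] using h1.mono0.monotone hx.2)

lemma H1.derivAtOne_pos (h1 : H1 f0 f1 df0 df1 d) (i : Fin 2) : 0 < derivAtOne df0 df1 i := by
  unfold derivAtOne
  split
  exacts [h1.deriv0_one.1, h1.deriv1_one]

lemma IsFiberOrbit.derivAtOne_mul_le (h1 : H1 f0 f1 df0 df1 d) (h2 : H2 df0 df1 d)
    (hz : IsFiberOrbit f0 f1 d ξ z) (n : ℤ) :
    derivAtOne df0 df1 (ξ n) * (1 - z n) ≤ 1 - z (n + 1) := by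
  obtain ⟨hmem, hd, hnext⟩ := hz n
  rw [hnext, derivAtOne]
  rcases Fin.exists_fin_two.mp ⟨ξ n, rfl⟩ with h | h
  · rw [h, if_pos rfl, if_pos rfl]
    simpa [h1.f0_one] using mul_sub_le_sub_of_antitoneOn_deriv h1.hasDeriv0 h2.1.antitoneOn hmem
  · rw [h, if_neg (by decide), if_neg (by decide)]
    have := mul_sub_le_sub_of_antitoneOn_deriv h1.hasDeriv1 h2.2 ⟨hd h, hmem.2⟩
    linarith [(h1.maps1 (right_mem_Icc.mpr h1.d_mem.2.le)).2]

lemma IsFiberOrbit.prod_derivAtOne_mul_le (h1 : H1 f0 f1 df0 df1 d) (h2 : H2 df0 df1 d)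
    (hz : IsFiberOrbit f0 f1 d ξ z) (k : ℤ) (n : ℕ) :
    (∏ i ∈ Finset.range n, derivAtOne df0 df1 (ξ (k + i))) * (1 - z k) ≤ 1 - z (k + n) := by
  induction n with
  | zero => simp
  | succ n ih =>
    rw [Finset.prod_range_succ, mul_comm _ (derivAtOne _ _ _), mul_assoc, Nat.cast_succ,
      ← add_assoc]
    exact (mul_le_mul_of_nonneg_left ih (h1.derivAtOne_pos _).le).trans
      (hz.derivAtOne_mul_le h1 h2 _)

lemma IsFiberOrbit.prod_derivAtOne_le (h1 : H1 f0 f1 df0 df1 d) (h2 : H2 df0 df1 d)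
    (hz : IsFiberOrbit f0 f1 d ξ z) (n : ℕ) (k : ℤ) :
    ∏ i ∈ Finset.range n, derivAtOne df0 df1 (ξ (k + i)) ≤ max 1 (df1 1 / (1 - f1 1)) := by
  induction n generalizing k with
  | zero => simp
  | succ n ih =>
    have hshift : ∀ i : ℕ, k + ((i + 1 : ℕ) : ℤ) = k + 1 + i := fun i => by push_cast; ring
    rw [Finset.prod_range_succ', mul_comm]
    simp only [hshift, Nat.cast_zero, add_zero]
    set P := ∏ i ∈ Finset.range n, derivAtOne df0 df1 (ξ (k + 1 + i))
    have hP0 : 0 ≤ P := Finset.prod_nonneg fun i _ => (h1.derivAtOne_pos _).le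
    rcases Fin.exists_fin_two.mp ⟨ξ k, rfl⟩ with h | h
    · rw [h, derivAtOne, if_pos rfl]
      exact (mul_le_of_le_one_left hP0 h1.deriv0_one.2.le).trans (ih (k + 1))
    · -- after a `1` the orbit is at distance at least `1 - f₁ 1` from `1`, which caps `P`
      rw [h, derivAtOne, if_neg (by decide)]
      have hgap : 0 < 1 - f1 1 := by
        linarith [h1.f1_below 1 (right_mem_Icc.mpr h1.d_mem.2.le)]
      have hz1 : 1 - f1 1 ≤ 1 - z (k + 1) := by
        have := (hz k).2.2
        rw [h, if_neg (by decide)] at this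
        linarith [h1.mono1.monotone (hz k).1.2]
      have hP : P * (1 - f1 1) ≤ 1 :=
        calc P * (1 - f1 1) ≤ P * (1 - z (k + 1)) := mul_le_mul_of_nonneg_left hz1 hP0
          _ ≤ 1 - z (k + 1 + n) := hz.prod_derivAtOne_mul_le h1 h2 (k + 1) n
          _ ≤ 1 := by linarith [(hz (k + 1 + n)).1.1]
      refine le_max_of_le_right ((le_div_iff₀ hgap).2 ?_)
      calc df1 1 * P * (1 - f1 1) = df1 1 * (P * (1 - f1 1)) := mul_assoc _ _ _
        _ ≤ df1 1 := mul_le_of_le_one_right h1.deriv1_one.le hP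

lemma sum_log_derivAtOne_le (h1 : H1 f0 f1 df0 df1 d) (h2 : H2 df0 df1 d)
    (hξ : ξ ∈ SigmaA f0 f1 d) (k : ℤ) (n : ℕ) :
    ∑ i ∈ Finset.range n, Real.log (derivAtOne df0 df1 (ξ (k + i))) ≤
      Real.log (max 1 (df1 1 / (1 - f1 1))) := by
  obtain ⟨z, hz⟩ := exists_isFiberOrbit hξ
  rw [← Real.log_prod fun i _ => (h1.derivAtOne_pos _).ne']
  exact Real.log_le_log (Finset.prod_pos fun i _ => h1.derivAtOne_pos _)
    (hz.prod_derivAtOne_le h1 h2 n k)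

end FiberOrbit

section Consequences

variable {f0 f1 df0 df1 : ℝ → ℝ} {d : ℝ}

lemma IsInvSigma.log_derivAtOne_average_nonpos (h1 : H1 f0 f1 df0 df1 d) (h2 : H2 df0 df1 d)
    {ν : Measure Seq2} (hν : IsInvSigma f0 f1 d ν) :
    (ν {ξ | ξ 0 = 0}).toReal * Real.log (df0 1) +
      (ν {ξ | ξ 0 = 1}).toReal * Real.log (df1 1) ≤ 0 := by
  obtain ⟨hprob, hfull, hmap⟩ := hν
  set K := Real.log (max 1 (df1 1 / (1 - f1 1)))
  let g : Fin 2 → ℝ := fun i => Real.log (derivAtOne df0 df1 i)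
  let φ : Seq2 → ℝ := fun ξ => g (ξ 0)
  have hφ : Measurable φ := (Measurable.of_discrete (f := g)).comp (measurable_pi_apply 0)
  have hint : ∫ ξ, φ ξ ∂ν = (ν {ξ | ξ 0 = 0}).toReal * Real.log (df0 1) +
      (ν {ξ | ξ 0 = 1}).toReal * Real.log (df1 1) := by
    rw [integral_comp_apply_zero ν g]
    simp [g, derivAtOne]
  rw [← hint]
  refine integral_nonpos_of_birkhoffSum_le (K := K) ⟨measurable_shift, hmap⟩
    (Integrable.comp_measurable (g := g) .of_finite (measurable_pi_apply 0)) fun n => ?_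
  have hmeas : MeasurableSet {ξ | birkhoffSum shift φ n ξ ≤ K} :=
    measurableSet_le (Finset.measurable_sum _ fun k _ => hφ.comp (measurable_shift.iterate k))
      measurable_const
  refine (ae_iff_measure_eq hmeas.nullMeasurableSet).2
    (le_antisymm (measure_mono (subset_univ _)) ?_)
  rw [measure_univ, ← hfull]
  refine measure_mono fun ξ hξ => ?_
  simpa [birkhoffSum, φ, shift_iterate_apply] using sum_log_derivAtOne_le h1 h2 hξ 0 n
theorem subshiftEntropy_SigmaA_le (h1 : H1 f0 f1 df0 df1 d)
    (h2 : H2 df0 df1 d) (hb : 0 < Real.log (df1 1)) :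
    subshiftEntropy (SigmaA f0 f1 d) ≤
      entH (min (1 / 2) (-Real.log (df0 1) / (Real.log (df1 1) - Real.log (df0 1)))) := by
  classical
  set a := Real.log (df0 1)
  set b := Real.log (df1 1)
  have ha : a < 0 := Real.log_neg h1.deriv0_one.1 h1.deriv0_one.2
  set p := min (1 / 2) (-a / (b - a))
  have hp0 : 0 < p := lt_min (by norm_num) (div_pos (neg_pos.2 ha) (by linarith))
  have hp_half : p ≤ 1 / 2 := min_le_left _ _
  set t := (Real.log (1 - p) - Real.log p) / (b - a)
  have ht : 0 ≤ t :=
    div_nonneg (sub_nonneg.2 (Real.log_le_log hp0 (by linarith))) (by linarith)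
  have hK : 0 ≤ Real.log (max 1 (df1 1 / (1 - f1 1))) := Real.log_nonneg (le_max_left _ _)
  -- `log` of the Bernoulli(`p`) weight is affine in `log f_i'(1)`, so the Birkhoff bound of a
  -- word becomes a lower bound on its Bernoulli mass
  let w : Fin 2 → ℝ := fun i => if i = 0 then 1 - p else p
  obtain ⟨hw0, hw1⟩ := log_bernoulli_eq_neg_entH_sub (p := p) ha hb rfl
  have hletter : ∀ i, Real.log (w i) = -entH p - t * Real.log (derivAtOne df0 df1 i) :=
    Fin.forall_fin_two.2 ⟨by simp only [w, derivAtOne, ↓reduceIte]; exact hw0,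
      by simp only [w, derivAtOne, if_neg (by decide : (1 : Fin 2) ≠ 0)]; exact hw1⟩
  refine subshiftEntropy_le_of_wordCount_le_exp
    (entH_eq_binEntropy ▸ Real.binEntropy_nonneg hp0.le (by linarith)) (mul_nonneg ht hK)
    fun n => (Nat.cast_le.2 (wordCount_le_card _ n)).trans
      (card_le_exp_of_neg_le_sum_log w (Fin.forall_fin_two.2 ⟨by simp [w]; linarith, by simpa [w]⟩)
        (by simp [w]) _ fun v hv => ?_)
  obtain ⟨ξ, hξ, k, hk⟩ := (Finset.mem_filter.1 hv).2
  have hsum := sum_log_derivAtOne_le h1 h2 hξ k n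
  rw [← Fin.sum_univ_eq_sum_range (fun i => Real.log (derivAtOne df0 df1 (ξ (k + i))))] at hsum
  simp only [hletter, ← hk, Finset.sum_sub_distrib, ← Finset.mul_sum, Finset.sum_const,
    Finset.card_univ, Fintype.card_fin, nsmul_eq_mul]
  nlinarith [mul_le_mul_of_nonneg_left hsum ht]

end Consequences

theorem statement_19 (f0 f1 df0 df1 : ℝ → ℝ) (d : ℝ) (hH1 : H1 f0 f1 df0 df1 d)
    (hH2 : H2 df0 df1 d) :
    (∀ ν : Measure Seq2, IsErgSigma f0 f1 d ν →
      (ν { ξ : Seq2 | ξ 0 = 0 }).toReal * Real.log (df0 1) +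
        (ν { ξ : Seq2 | ξ 0 = 1 }).toReal * Real.log (df1 1) ≤ 0) ∧
    (1 < df1 1 →
      (∀ ν : Measure Seq2, IsInvSigma f0 f1 d ν →
        (ν { ξ : Seq2 | ξ 0 = 1 }).toReal ≤
          (|Real.log (df0 1)| / Real.log (df1 1)) * (ν { ξ : Seq2 | ξ 0 = 0 }).toReal) ∧
      subshiftEntropy (SigmaA f0 f1 d) ≤
        entH (min (1 / 2)
          ((|Real.log (df0 1)| / Real.log (df1 1)) /
            (1 + |Real.log (df0 1)| / Real.log (df1 1))))) := by
  have ha : Real.log (df0 1) < 0 := Real.log_neg hH1.deriv0_one.1 hH1.deriv0_one.2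
  refine ⟨fun ν hν => hν.1.log_derivAtOne_average_nonpos hH1 hH2, fun hb1 => ?_⟩
  have hb : 0 < Real.log (df1 1) := Real.log_pos hb1
  refine ⟨fun ν hν => ?_, ?_⟩
  · have := hν.log_derivAtOne_average_nonpos hH1 hH2
    rw [abs_of_neg ha, div_mul_eq_mul_div, le_div_iff₀ hb]
    linarith
  · have hC : |Real.log (df0 1)| / Real.log (df1 1) / (1 + |Real.log (df0 1)| / Real.log (df1 1)) =
        -Real.log (df0 1) / (Real.log (df1 1) - Real.log (df0 1)) := by
      rw [abs_of_neg ha]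
      field_simp
      ring
    rw [hC]
    exact subshiftEntropy_SigmaA_le hH1 hH2 hb

end DGR
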